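/- arXiv:1911.09350 — 2 statements merged into one kernel-verified Lean document; each statement's English description precedes it below -/
import Mathlib

section
/- Let m be an odd positive integer and let a(X), b(X) ∈ R_m. Consider the R_m-module homomorphism γ_{a,b} : R_m → R_m × R'_m defined by γ_{a,b}(f(X)) = (f(X)a(X), 2(f(X)b(X))). Then the kernel of γ_{a,b} is the ideal of R_m generated by h_{a,b}(X) = (X^m − 1)/gcd(a(X), b(X), X^m − 1). -/
open Polynomial

noncomputable section

/-- The polynomial `X^m - 1` over `Z/2`. -/
def fm (m : ℕ) : Polynomial (ZMod 2) := X ^ m - 1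

/-- The polynomial `X^m - 1` over `Z/4`. -/
def fm4 (m : ℕ) : Polynomial (ZMod 4) := X ^ m - 1

/-- `R_m = (Z/2)[X]/⟨X^m - 1⟩`. -/
abbrev R2 (m : ℕ) : Type := Polynomial (ZMod 2) ⧸ Ideal.span {fm m}

/-- `R'_m = (Z/4)[X]/⟨X^m - 1⟩`. -/
abbrev R4 (m : ℕ) : Type := Polynomial (ZMod 4) ⧸ Ideal.span {fm4 m}

def mk2 (m : ℕ) : Polynomial (ZMod 2) →+* R2 m := Ideal.Quotient.mk _

def mk4 (m : ℕ) : Polynomial (ZMod 4) →+* R4 m := Ideal.Quotient.mk _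

/-- The canonical representative (of degree `< m`) of an element of `R2 m`. -/
def rep2 (m : ℕ) (r : R2 m) : Polynomial (ZMod 2) :=
  (Function.surjInv (Ideal.Quotient.mk_surjective (I := Ideal.span {fm m})) r) %ₘ fm m

/-- Coefficientwise doubling map `(Z/2)[X] → (Z/4)[X]`, `a ↦ 2a` on each coefficient. -/
def polyDbl (p : Polynomial (ZMod 2)) : Polynomial (ZMod 4) :=
  ∑ i ∈ p.support, Polynomial.C (2 * ((p.coeff i).val : ZMod 4)) * X ^ i

/-- The additive embedding `R_m → R'_m`, `f ↦ 2f`. -/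
def iota (m : ℕ) (r : R2 m) : R4 m := mk4 m (polyDbl (rep2 m r))

/-! Since `f ↦ 2f` is injective, `f` lies in the kernel iff `X^m - 1` divides both
`f a` and `f b`, i.e. iff it divides `f · gcd(a, b, X^m - 1)` (Bézout); cancelling the gcd this says
exactly that `h_{a,b}` divides `f`. -/

namespace EuclideanDomain

variable {R : Type*} [EuclideanDomain R]

theorem div_dvd_iff_dvd_mul {n g f : R} (hg : g ≠ 0) (hgn : g ∣ n) : n / g ∣ f ↔ n ∣ f * g := by
  conv_rhs => rw [← EuclideanDomain.mul_div_cancel' hg hgn, mul_comm f, mul_dvd_mul_iff_left hg]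

variable [DecidableEq R]

theorem dvd_mul_gcd_iff (n f a b : R) : n ∣ f * gcd a b ↔ n ∣ f * a ∧ n ∣ f * b := by
  refine ⟨fun h => ⟨h.trans (mul_dvd_mul_left f (gcd_dvd_left a b)),
    h.trans (mul_dvd_mul_left f (gcd_dvd_right a b))⟩, fun ⟨ha, hb⟩ => ?_⟩
  rw [gcd_eq_gcd_ab, mul_add, ← mul_assoc, ← mul_assoc]
  exact dvd_add (ha.mul_right _) (hb.mul_right _)

theorem div_gcd_gcd_dvd_iff {n : R} (hn : n ≠ 0) (f a b : R) :
    n / gcd a (gcd b n) ∣ f ↔ n ∣ f * a ∧ n ∣ f * b := by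
  have hgn : gcd a (gcd b n) ∣ n := (gcd_dvd_right a _).trans (gcd_dvd_right b n)
  rw [div_dvd_iff_dvd_mul (ne_zero_of_dvd_ne_zero hn hgn) hgn, dvd_mul_gcd_iff, dvd_mul_gcd_iff,
    and_iff_left (dvd_mul_left n f)]

end EuclideanDomain

theorem Ideal.Quotient.mk_mem_span_singleton_mk_iff {R : Type*} [CommRing R] {n q : R}
    (hq : q ∣ n) (f : R) :
    mk (span {n}) f ∈ span {mk (span {n}) q} ↔ q ∣ f := by
  rw [mem_span_singleton]
  refine ⟨fun ⟨c, hc⟩ => ?_, map_dvd _⟩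
  obtain ⟨c, rfl⟩ := mk_surjective c
  rw [← map_mul, Ideal.Quotient.eq, mem_span_singleton] at hc
  simpa using (hq.trans hc).add (dvd_mul_right q c)

theorem Polynomial.Monic.mk_eq_zero_iff_of_degree_lt {R : Type*} [CommRing R] {q p : R[X]}
    (hq : q.Monic) (hp : p.degree < q.degree) :
    Ideal.Quotient.mk (Ideal.span {q}) p = 0 ↔ p = 0 :=
  (Ideal.Quotient.eq_zero_iff_dvd q p).trans
    ⟨fun h => by_contra fun h0 => hq.not_dvd_of_degree_lt h0 hp h, fun h => h ▸ dvd_zero q⟩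

theorem coeff_polyDbl (p : Polynomial (ZMod 2)) (n : ℕ) :
    (polyDbl p).coeff n = 2 * ((p.coeff n).val : ZMod 4) := by
  rw [polyDbl, finsetSum_coeff]
  simp only [coeff_C_mul, coeff_X_pow, mul_ite, mul_one, mul_zero, Finset.sum_ite_eq]
  split_ifs with h
  · rfl
  · simp [notMem_support_iff.mp h]

theorem degree_polyDbl_le (p : Polynomial (ZMod 2)) : (polyDbl p).degree ≤ p.degree := by
  refine degree_le_iff_coeff_zero _ _ |>.mpr fun k hk => ?_
  simp [coeff_polyDbl, coeff_eq_zero_of_degree_lt hk]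

theorem polyDbl_eq_zero_iff (p : Polynomial (ZMod 2)) : polyDbl p = 0 ↔ p = 0 := by
  have double_eq_zero_iff : ∀ x : ZMod 2, 2 * (x.val : ZMod 4) = 0 ↔ x = 0 := by decide
  simp only [Polynomial.ext_iff, coeff_polyDbl, coeff_zero, double_eq_zero_iff]

section

variable {m : ℕ}

theorem fm_monic (hm : 0 < m) : (fm m).Monic := by
  simpa [fm] using monic_X_pow_sub_C (1 : ZMod 2) hm.ne'

theorem degree_fm (hm : 0 < m) : (fm m).degree = m := by
  simpa [fm] using degree_X_pow_sub_C hm (1 : ZMod 2)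

theorem fm4_monic (hm : 0 < m) : (fm4 m).Monic := by
  simpa [fm4] using monic_X_pow_sub_C (1 : ZMod 4) hm.ne'

theorem degree_fm4 (hm : 0 < m) : (fm4 m).degree = m := by
  have : Nontrivial (ZMod 4) := ⟨0, 1, by decide⟩
  simpa [fm4] using degree_X_pow_sub_C hm (1 : ZMod 4)

theorem mk2_rep2 (r : R2 m) : mk2 m (rep2 m r) = r := by
  rw [rep2, modByMonic_eq_sub_mul_div, map_sub, map_mul, mk2, Ideal.Quotient.mk_singleton_self,
    zero_mul, sub_zero]
  exact Function.surjInv_eq Ideal.Quotient.mk_surjective r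

theorem degree_rep2_lt (hm : 0 < m) (r : R2 m) : (rep2 m r).degree < m :=
  degree_fm hm ▸ degree_modByMonic_lt _ (fm_monic hm)

theorem rep2_eq_zero_iff (hm : 0 < m) (r : R2 m) : rep2 m r = 0 ↔ r = 0 := by
  have hdeg : (rep2 m r).degree < (fm m).degree :=
    (degree_rep2_lt hm r).trans_eq (degree_fm hm).symm
  rw [← (fm_monic hm).mk_eq_zero_iff_of_degree_lt hdeg]
  exact iff_of_eq (congrArg (· = 0) (mk2_rep2 r))

theorem iota_eq_zero_iff (hm : 0 < m) (r : R2 m) : iota m r = 0 ↔ r = 0 := by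
  have hdeg : (polyDbl (rep2 m r)).degree < (fm4 m).degree :=
    (degree_polyDbl_le _).trans_lt ((degree_rep2_lt hm r).trans_eq (degree_fm4 hm).symm)
  rw [iota, mk4, (fm4_monic hm).mk_eq_zero_iff_of_degree_lt hdeg, polyDbl_eq_zero_iff,
    rep2_eq_zero_iff hm]

end

theorem statement1_general (m : ℕ) (hmpos : 0 < m)
    (A B : Polynomial (ZMod 2)) :
    {f : R2 m | (f * mk2 m A, iota m (f * mk2 m B)) = (0 : R2 m × R4 m)}
      = (↑(Ideal.span {mk2 m (fm m / EuclideanDomain.gcd A (EuclideanDomain.gcd B (fm m)))} :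
          Ideal (R2 m)) : Set (R2 m)) := by
  have hdvd : fm m / EuclideanDomain.gcd A (EuclideanDomain.gcd B (fm m)) ∣ fm m :=
    EuclideanDomain.div_dvd_of_dvd
      ((EuclideanDomain.gcd_dvd_right _ _).trans (EuclideanDomain.gcd_dvd_right _ _))
  ext f
  obtain ⟨F, rfl⟩ := Ideal.Quotient.mk_surjective f
  rw [Set.mem_ofPred_eq, SetLike.mem_coe, Prod.mk_eq_zero, iota_eq_zero_iff hmpos, mk2,
    Ideal.Quotient.mk_mem_span_singleton_mk_iff hdvd,
    EuclideanDomain.div_gcd_gcd_dvd_iff (fm_monic hmpos).ne_zero, ← map_mul, ← map_mul,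
    Ideal.Quotient.eq_zero_iff_dvd, Ideal.Quotient.eq_zero_iff_dvd]

/-- The kernel of the `R_m`-module homomorphism
`γ_{a,b} : f ↦ (f·a, 2(f·b))` is the ideal of `R_m` generated by
`h_{a,b} = (X^m-1)/gcd(A, B, X^m-1)`. -/
theorem statement1 (m : ℕ) (hm : Odd m) (hmpos : 0 < m)
    (A B : Polynomial (ZMod 2)) :
    {f : R2 m | (f * mk2 m A, iota m (f * mk2 m B)) = (0 : R2 m × R4 m)}
      = (↑(Ideal.span {mk2 m (fm m / EuclideanDomain.gcd A (EuclideanDomain.gcd B (fm m)))} :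
          Ideal (R2 m)) : Set (R2 m)) :=
  statement1_general m hmpos A B

end
end

section
/- Let m be an odd positive integer, let ℓ_m be the minimal degree of the irreducible factors in (Z/2)[X] of (X^m − 1)/(X − 1), and let d be an integer with ℓ_m ≤ d < m. Then the number of ideals of R_m of Z/2-dimension d that are contained in J_m is at most m^{d/ℓ_m} (real exponent d/ℓ_m). -/
open Polynomial

noncomputable section

/-- The canonical representative (of degree `< m`) of an element of `R4 m`. -/
def rep4 (m : ℕ) (r : R4 m) : Polynomial (ZMod 4) :=
  (Function.surjInv (Ideal.Quotient.mk_surjective (I := Ideal.span {fm4 m})) r) %ₘ fm4 m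

/-- Hamming weight of an element of `R_m` (of its coefficient vector). -/
def wt2 (m : ℕ) (r : R2 m) : ℕ := (rep2 m r).support.card

/-- Lee weight of an element of `Z/4`. -/
def lee (x : ZMod 4) : ℕ := min x.val (4 - x.val)

/-- Lee weight of an element of `R'_m` (of its coefficient vector). -/
def wtLee (m : ℕ) (r : R4 m) : ℕ := ∑ i ∈ (rep4 m r).support, lee ((rep4 m r).coeff i)

/-- The augmentation ideal `J_m = ⟨X - 1⟩` of `R_m`. -/
def Jm (m : ℕ) : Ideal (R2 m) := Ideal.span {mk2 m (X - 1)}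

/-- The `Z2Z4`-additive cyclic code `C_{a,b} = {(f·a, 2(f·b)) : f ∈ R_m}`. -/
def Cab (m : ℕ) (a b : R2 m) : Set (R2 m × R4 m) :=
  {w | ∃ f : R2 m, w = (f * a, iota m (f * b))}

/-- Dimension of `C_{a,b}` as a vector space over `Z/2`, i.e. `log₂ |C_{a,b}|`. -/
def dimCab (m : ℕ) (a b : R2 m) : ℕ := Nat.log 2 (Nat.card (Cab m a b))

/-- `(X^m - 1)/(X - 1) = X^{m-1} + ⋯ + X + 1` over `Z/2`. -/
def geomPoly (m : ℕ) : Polynomial (ZMod 2) := ∑ i ∈ Finset.range m, X ^ i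

/-- `ℓ_m`: minimal degree of the irreducible factors of `(X^m-1)/(X-1)` in `(Z/2)[X]`. -/
def ell (m : ℕ) : ℕ :=
  sInf {d | ∃ p : Polynomial (ZMod 2), Irreducible p ∧ p ∣ geomPoly m ∧ p.natDegree = d}

/-- The binary entropy function `H(x) = -x·log₂x - (1-x)·log₂(1-x)`. -/
def Hent (x : ℝ) : ℝ := -(x * Real.logb 2 x) - (1 - x) * Real.logb 2 (1 - x)

/-! An ideal `I` of `R_m` is determined by its generator polynomial `g ∣ X^m - 1`, and
`dim I = m - deg g`. If `I ⊆ J_m` then `X - 1 ∣ g`, so, `X^m - 1` being squarefree for odd `m`,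
the check polynomial `(X^m - 1)/g` has degree `d` and is a product of distinct irreducible factors
of `(X^m - 1)/(X - 1)`, each of degree at least `ℓ_m`. Hence `I` is determined by a set of at most
`⌊d/ℓ_m⌋` irreducible factors of `X^m - 1`, of which there are at most `m`; enumerating such a
set by a map from `Fin ⌊d/ℓ_m⌋` gives at most `m^⌊d/ℓ_m⌋` ideals. -/

open UniqueFactorizationMonoid Finset

theorem Function.exists_surjective_fin_of_card_le {α : Type*} [Fintype α] {K : ℕ}
    (hcard : Fintype.card α ≤ K) (hK : K ≠ 0 → Nonempty α) :
    ∃ f : Fin K → α, Function.Surjective f := by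
  refine Function.exists_surjective_iff.mpr ⟨?_, Function.Embedding.nonempty_of_card_le ?_⟩
  · rcases eq_or_ne K 0 with rfl | hK0
    · exact ⟨Fin.elim0⟩
    · exact ⟨fun _ => (hK hK0).some⟩
  · simpa using hcard

theorem Nat.card_le_card_pow_of_injective_finset {α β : Type*} {P : Finset β} {K : ℕ}
    (φ : α → Finset β) (hφ : Function.Injective φ) (hP : ∀ a, φ a ⊆ P)
    (hcard : ∀ a, #(φ a) ≤ K) (hK : ∀ a, K ≠ 0 → (φ a).Nonempty) :
    Nat.card α ≤ #P ^ K := by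
  have henum : ∀ a, ∃ f : Fin K → φ a, Function.Surjective f := fun a =>
    Function.exists_surjective_fin_of_card_le (by simpa using hcard a)
      (fun h => (hK a h).to_subtype)
  choose f hf using henum
  let σ : α → Fin K → P := fun a i => ⟨f a i, hP a (f a i).2⟩
  have hrange : ∀ a x, x ∈ φ a ↔ ∃ i, (σ a i : β) = x := fun a x =>
    ⟨fun hx => (hf a ⟨x, hx⟩).imp fun _ hi => congrArg Subtype.val hi,
     fun ⟨i, hi⟩ => hi ▸ (f a i).2⟩
  have hσ : Function.Injective σ := fun a b hab =>
    hφ <| Finset.ext fun x => by rw [hrange, hrange, hab]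
  simpa using Nat.card_le_card_of_injective σ hσ

namespace Polynomial

variable {K : Type*} [Field K]

theorem card_primeFactors_mul_le_natDegree [DecidableEq K] {q : K[X]} (hq : q ≠ 0) {ℓ : ℕ}
    (hℓ : ∀ p ∈ primeFactors q, ℓ ≤ p.natDegree) :
    #(primeFactors q) * ℓ ≤ q.natDegree := by
  have hne : ∀ p ∈ primeFactors q, p ≠ 0 := fun p hp =>
    (prime_of_normalized_factor p (mem_primeFactors.mp hp)).ne_zero
  calc #(primeFactors q) * ℓ ≤ ∑ p ∈ primeFactors q, p.natDegree := by
        simpa [mul_comm] using Finset.card_nsmul_le_sum _ _ _ hℓ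
    _ = (radical q).natDegree := (natDegree_prod _ _ hne).symm
    _ ≤ q.natDegree := natDegree_le_of_dvd radical_dvd_self hq

variable {f : K[X]}

-- Only determined up to a unit; nothing below depends on the choice.
def genPoly (I : Ideal (K[X] ⧸ Ideal.span {f})) : K[X] :=
  Submodule.IsPrincipal.generator (I.comap (Ideal.Quotient.mk _))

def checkPoly (I : Ideal (K[X] ⧸ Ideal.span {f})) : K[X] := f / genPoly I

variable (I : Ideal (K[X] ⧸ Ideal.span {f}))

theorem span_genPoly : Ideal.span {genPoly I} = I.comap (Ideal.Quotient.mk _) :=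
  Ideal.span_singleton_generator _

theorem genPoly_dvd : genPoly I ∣ f := by
  rw [← Ideal.mem_span_singleton, span_genPoly, Ideal.mem_comap,
    Ideal.Quotient.eq_zero_iff_mem.mpr (Ideal.mem_span_singleton_self f)]
  exact I.zero_mem

theorem genPoly_mul_checkPoly (hf : f ≠ 0) : genPoly I * checkPoly I = f :=
  EuclideanDomain.mul_div_cancel' (fun h => hf (zero_dvd_iff.mp (h ▸ genPoly_dvd I)))
    (genPoly_dvd I)

theorem finrank_add_natDegree_genPoly (hf : f ≠ 0) :
    Module.finrank K I + (genPoly I).natDegree = f.natDegree := by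
  have : Module.Finite K (K[X] ⧸ Ideal.span {f}) :=
    Module.Finite.of_basis (AdjoinRoot.powerBasis hf).basis
  have hle : Ideal.span {f} ≤ Ideal.span {genPoly I} :=
    Ideal.span_singleton_le_span_singleton.mpr (genPoly_dvd I)
  have hmap : (Ideal.span {genPoly I}).map (Ideal.Quotient.mkₐ K (Ideal.span {f})) = I := by
    rw [span_genPoly]
    exact Ideal.map_comap_of_surjective _ Ideal.Quotient.mk_surjective I
  have hquot : Module.finrank K ((K[X] ⧸ Ideal.span {f}) ⧸ I) = (genPoly I).natDegree := by
    rw [← finrank_quotient_span_eq_natDegree]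
    exact ((Ideal.quotientEquivAlgOfEq K hmap).symm.trans
      (DoubleQuot.quotQuotEquivQuotOfLEₐ K hle)).toLinearEquiv.finrank_eq
  rw [← hquot, ← finrank_quotient_span_eq_natDegree (f := f),
    ← Submodule.finrank_quotient_add_finrank (I.restrictScalars K),
    (Submodule.Quotient.restrictScalarsEquiv K I).finrank_eq, add_comm]
  rfl

theorem checkPoly_dvd (hf : f ≠ 0) : checkPoly I ∣ f :=
  Dvd.intro_left _ (genPoly_mul_checkPoly I hf)

theorem checkPoly_ne_zero (hf : f ≠ 0) : checkPoly I ≠ 0 :=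
  right_ne_zero_of_mul (genPoly_mul_checkPoly I hf ▸ hf)

theorem natDegree_checkPoly (hf : f ≠ 0) : (checkPoly I).natDegree = Module.finrank K I := by
  have hdeg := congrArg natDegree (genPoly_mul_checkPoly I hf)
  rw [natDegree_mul (left_ne_zero_of_mul (genPoly_mul_checkPoly I hf ▸ hf))
    (checkPoly_ne_zero I hf)] at hdeg
  have := finrank_add_natDegree_genPoly I hf
  omega

theorem primeFactors_checkPoly_nonempty [DecidableEq K] (hf : f ≠ 0)
    (hI : Module.finrank K I ≠ 0) : (primeFactors (checkPoly I)).Nonempty := by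
  rw [Finset.nonempty_iff_ne_empty, Ne, primeFactors_eq_empty_iff (checkPoly_ne_zero I hf)]
  exact fun hunit => hI (natDegree_checkPoly I hf ▸ natDegree_eq_zero_of_isUnit hunit)

theorem primeFactors_checkPoly_subset [DecidableEq K] (hf : f ≠ 0) :
    primeFactors (checkPoly I) ⊆ primeFactors f :=
  radical_dvd_radical_iff_primeFactors_subset_primeFactors.mp
    (radical_dvd_radical (checkPoly_dvd I hf) hf)

theorem primeFactors_checkPoly_injective [DecidableEq K] (hf : Squarefree f) :
    Function.Injective fun I : Ideal (K[X] ⧸ Ideal.span {f}) => primeFactors (checkPoly I) := by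
  intro I J hIJ
  have hf0 : f ≠ 0 := hf.ne_zero
  have hradical : ∀ I : Ideal (K[X] ⧸ Ideal.span {f}),
      Associated (radical (checkPoly I)) (checkPoly I) := fun I =>
    radical_associated (hf.squarefree_of_dvd (checkPoly_dvd I hf0)).isRadical
      (checkPoly_ne_zero I hf0)
  have hcheck : Associated (checkPoly I) (checkPoly J) := by
    have hrad : radical (checkPoly I) = radical (checkPoly J) := congrArg (·.prod id) hIJ
    exact (hradical I).symm.trans (hrad ▸ hradical J)
  have hgen : Associated (genPoly I) (genPoly J) :=
    Associated.of_mul_right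
      (.of_eq (by rw [genPoly_mul_checkPoly I hf0, genPoly_mul_checkPoly J hf0]))
      hcheck (checkPoly_ne_zero I hf0)
  apply Ideal.comap_injective_of_surjective _ Ideal.Quotient.mk_surjective
  rw [← span_genPoly, ← span_genPoly, Ideal.span_singleton_eq_span_singleton.mpr hgen]

end Polynomial

theorem Ideal.comap_mk_span_singleton_mk {R : Type*} [CommRing R] {a f : R} (h : a ∣ f) :
    (Ideal.span {Ideal.Quotient.mk (Ideal.span {f}) a}).comap (Ideal.Quotient.mk _) =
      Ideal.span {a} := by
  rw [← Set.image_singleton, ← Ideal.map_span,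
    Ideal.comap_map_of_surjective _ Ideal.Quotient.mk_surjective, ← RingHom.ker_eq_comap_bot,
    Ideal.mk_ker, sup_eq_left]
  exact Ideal.span_singleton_le_span_singleton.mpr h

theorem fm_eq_geomPoly_mul (m : ℕ) : fm m = geomPoly m * (X - 1) := by
  rw [fm, geomPoly, geom_sum_mul]

theorem natDegree_fm (m : ℕ) : (fm m).natDegree = m := by
  rw [fm, ← C_1, natDegree_X_pow_sub_C]

theorem squarefree_fm {m : ℕ} (hm : Odd m) : Squarefree (fm m) := by
  refine (X_pow_sub_one_separable_iff.mpr ?_).squarefree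
  rw [Ne, ZMod.natCast_eq_zero_iff]
  exact hm.not_two_dvd_nat

theorem ell_le_natDegree {m : ℕ} {p : (ZMod 2)[X]} (hp : Irreducible p) (h : p ∣ geomPoly m) :
    ell m ≤ p.natDegree :=
  Nat.sInf_le ⟨p, hp, h, rfl⟩

theorem ell_pos {m : ℕ} {p : (ZMod 2)[X]} (hp : Irreducible p) (h : p ∣ geomPoly m) :
    0 < ell m := by
  obtain ⟨q, hq, -, hdeg⟩ : ell m ∈ {d | ∃ q : (ZMod 2)[X], Irreducible q ∧ q ∣ geomPoly m ∧
      q.natDegree = d} := Nat.sInf_mem ⟨_, p, hp, h, rfl⟩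
  rw [← hdeg]
  exact hq.natDegree_pos

theorem card_primeFactors_fm_le {m : ℕ} (hm : Odd m) : #(primeFactors (fm m)) ≤ m := by
  simpa [natDegree_fm] using card_primeFactors_mul_le_natDegree (squarefree_fm hm).ne_zero
    (ℓ := 1) fun p hp =>
      (irreducible_of_normalized_factor p (mem_primeFactors.mp hp)).natDegree_pos

section Cyclic

variable {m : ℕ} {I : Ideal (R2 m)}

theorem X_sub_one_dvd_genPoly (hI : I ≤ Jm m) : X - 1 ∣ genPoly I := by
  rw [← Ideal.mem_span_singleton,
    ← Ideal.comap_mk_span_singleton_mk (fm_eq_geomPoly_mul m ▸ dvd_mul_left _ _)]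
  exact Ideal.comap_mono hI ((span_genPoly I).le (Ideal.mem_span_singleton_self _))

/-- Since `X - 1` divides the generator polynomial and `X^m - 1` is squarefree, the irreducible
factors of the check polynomial all lie in `(X^m - 1)/(X - 1)`. -/
theorem dvd_geomPoly_of_mem_primeFactors_checkPoly (hm : Odd m) (hI : I ≤ Jm m)
    {p : (ZMod 2)[X]} (hp : p ∈ primeFactors (checkPoly I)) : p ∣ geomPoly m := by
  have hprime : Prime p := prime_of_normalized_factor p (mem_primeFactors.mp hp)
  have hpk : p ∣ checkPoly I := dvd_of_mem_normalizedFactors (mem_primeFactors.mp hp)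
  have hf : fm m ≠ 0 := (squarefree_fm hm).ne_zero
  have hpf : p ∣ geomPoly m * (X - 1) := fm_eq_geomPoly_mul m ▸ hpk.trans (checkPoly_dvd I hf)
  refine (hprime.dvd_mul.mp hpf).resolve_right fun hpX => hprime.not_isUnit (squarefree_fm hm p ?_)
  rw [← genPoly_mul_checkPoly I hf]
  exact mul_dvd_mul (hpX.trans (X_sub_one_dvd_genPoly hI)) hpk

theorem card_primeFactors_checkPoly_le (hm : Odd m) (hI : I ≤ Jm m) :
    #(primeFactors (checkPoly I)) ≤ Module.finrank (ZMod 2) I / ell m := by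
  obtain hempty | ⟨p, hp⟩ := (primeFactors (checkPoly I)).eq_empty_or_nonempty
  · simp [hempty]
  have hf : fm m ≠ 0 := (squarefree_fm hm).ne_zero
  have hirr : ∀ q ∈ primeFactors (checkPoly I), Irreducible q := fun q hq =>
    irreducible_of_normalized_factor q (mem_primeFactors.mp hq)
  rw [Nat.le_div_iff_mul_le (ell_pos (hirr p hp)
    (dvd_geomPoly_of_mem_primeFactors_checkPoly hm hI hp)), ← natDegree_checkPoly I hf]
  exact card_primeFactors_mul_le_natDegree (checkPoly_ne_zero I hf) fun q hq =>
    ell_le_natDegree (hirr q hq) (dvd_geomPoly_of_mem_primeFactors_checkPoly hm hI hq)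

end Cyclic

theorem statement5_general (m : ℕ) (hm : Odd m)
    (d : ℕ) :
    (Nat.card {I : Ideal (R2 m) // I ≤ Jm m ∧ Module.finrank (ZMod 2) I = d} : ℝ)
      ≤ (m : ℝ) ^ ((d : ℝ) / (ell m : ℝ)) := by
  have hf : fm m ≠ 0 := (squarefree_fm hm).ne_zero
  have hinj : Function.Injective fun I : {I : Ideal (R2 m) // I ≤ Jm m ∧
      Module.finrank (ZMod 2) I = d} => primeFactors (checkPoly I.1) :=
    (primeFactors_checkPoly_injective (squarefree_fm hm)).comp Subtype.val_injective
  have hcount := Nat.card_le_card_pow_of_injective_finset _ hinj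
    (fun I => primeFactors_checkPoly_subset I.1 hf)
    (fun I => (card_primeFactors_checkPoly_le hm I.2.1).trans_eq (congrArg (· / ell m) I.2.2))
    (fun I hK => primeFactors_checkPoly_nonempty I.1 hf fun h =>
      hK (by rw [← I.2.2, h, Nat.zero_div]))
  calc (Nat.card {I : Ideal (R2 m) // I ≤ Jm m ∧ Module.finrank (ZMod 2) I = d} : ℝ)
      ≤ ((#(primeFactors (fm m)) ^ (d / ell m) : ℕ) : ℝ) := by exact_mod_cast hcount
    _ ≤ (m : ℝ) ^ ((d / ell m : ℕ) : ℝ) := by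
      rw [Real.rpow_natCast]; exact_mod_cast Nat.pow_le_pow_left (card_primeFactors_fm_le hm) _
    _ ≤ (m : ℝ) ^ ((d : ℝ) / (ell m : ℝ)) :=
      Real.rpow_le_rpow_of_exponent_le (by exact_mod_cast hm.pos) Nat.cast_div_le

/-- For `ℓ_m ≤ d < m`, the number of ideals of `R_m` of `Z/2`-dimension
`d` contained in `J_m` is at most `m^{d/ℓ_m}` (real exponent). -/
theorem statement5 (m : ℕ) (hm : Odd m) (hmpos : 0 < m)
    (d : ℕ) (hd1 : ell m ≤ d) (hd2 : d < m) :
    (Nat.card {I : Ideal (R2 m) // I ≤ Jm m ∧ Module.finrank (ZMod 2) I = d} : ℝ)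
      ≤ (m : ℝ) ^ ((d : ℝ) / (ell m : ℝ)) :=
  statement5_general m hm d

end
end
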